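/- arXiv:dg-ga/9512008 — 2 statements merged into one kernel-verified Lean document; each statement's English description precedes it below -/
import Mathlib

section
/- With B, T, δ and the Hermitian frame {Z_k} as above, the (0,1)-component of J(δ) ∈ V ⊂ V_ℂ equals (id + i J_ℂ) Σ_{k=1}^m B_ℂ(Z̄_k, Z_k), where the (0,1)-component of X ∈ V_ℂ is X^{0,1} := ½(X + i J_ℂ X). (This is the key identity (JδJ)^{0,1} = (1 + iJ) Σ_k ∇_{Z̄_k} Z_k used in the proof that holomorphic maps into (1,2)-symplectic manifolds have tension field τ(φ) = -dφ(JδJ).) -/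
open scoped TensorProduct

/-- The complex-linear extension `J_ℂ` of an ℝ-linear map `J : V → V` to the
complexification `V_ℂ = ℂ ⊗[ℝ] V`. -/
noncomputable def complexJ {V : Type*} [AddCommGroup V] [Module ℝ V]
    (J : V →ₗ[ℝ] V) : ℂ ⊗[ℝ] V →ₗ[ℂ] ℂ ⊗[ℝ] V :=
  J.baseChange ℂ

/-- The `(0,1)`-component `X^{0,1} = ½(X + i J_ℂ X)`. -/
noncomputable def comp01 {V : Type*} [AddCommGroup V] [Module ℝ V]
    (J : V →ₗ[ℝ] V) (X : ℂ ⊗[ℝ] V) : ℂ ⊗[ℝ] V :=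
  (1 / 2 : ℂ) • (X + Complex.I • complexJ J X)

/-- The Hermitian frame vector `Z_k = (e_k - i J e_k)/√2` in `V_ℂ`. -/
noncomputable def hermZ {V : Type*} [AddCommGroup V] [Module ℝ V] {m : ℕ}
    (J : V →ₗ[ℝ] V) (e : Fin m → V) (k : Fin m) : ℂ ⊗[ℝ] V :=
  ((Real.sqrt 2 : ℂ))⁻¹ • ((1 : ℂ) ⊗ₜ[ℝ] e k - Complex.I • ((1 : ℂ) ⊗ₜ[ℝ] J (e k)))

/-- The conjugate Hermitian frame vector `Z̄_k = (e_k + i J e_k)/√2` in `V_ℂ`. -/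
noncomputable def hermZbar {V : Type*} [AddCommGroup V] [Module ℝ V] {m : ℕ}
    (J : V →ₗ[ℝ] V) (e : Fin m → V) (k : Fin m) : ℂ ⊗[ℝ] V :=
  ((Real.sqrt 2 : ℂ))⁻¹ • ((1 : ℂ) ⊗ₜ[ℝ] e k + Complex.I • ((1 : ℂ) ⊗ₜ[ℝ] J (e k)))

/-!
Write `P = B(e,e) + B(Je,Je)` and `Q = B(e,Je) - B(Je,e)`, summed over the frame. Expanding the
Hermitian frame gives `Σ B_ℂ(Z̄_k, Z_k) = ½(P - iQ)`, and `J² = -1` gives `δ = Q - JP`, hence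
`Jδ = P + JQ`. Both sides of the identity are then `½(P + JQ - iQ + iJP)`.
-/

open TensorProduct

section

variable {V : Type*} [AddCommGroup V] [Module ℝ V] (J : V →ₗ[ℝ] V)

theorem complexJ_tmul (x : V) : complexJ J ((1 : ℂ) ⊗ₜ[ℝ] x) = (1 : ℂ) ⊗ₜ[ℝ] J x :=
  LinearMap.baseChange_tmul J 1 x

theorem T_self_add_T_J_self {B : V →ₗ[ℝ] V →ₗ[ℝ] V} {T : V → V → V}
    (hJ : ∀ v, J (J v) = -v) (hT : ∀ X Y : V, T X Y = B X (J Y) - J (B X Y)) (x : V) :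
    T x x + T (J x) (J x) = (B x (J x) - B (J x) x) - J (B x x + B (J x) (J x)) := by
  simp only [hT, hJ, map_neg, map_add]
  abel

theorem comp01_tmul_J_sub_J (hJ : ∀ v, J (J v) = -v) (P Q : V) :
    let w : ℂ ⊗[ℝ] V := (1 / 2 : ℂ) • ((1 : ℂ) ⊗ₜ[ℝ] P - Complex.I • (1 : ℂ) ⊗ₜ[ℝ] Q)
    comp01 J ((1 : ℂ) ⊗ₜ[ℝ] J (Q - J P)) = w + Complex.I • complexJ J w := by
  simp only [comp01, map_smul, map_sub, map_neg, complexJ_tmul, hJ, tmul_sub, tmul_neg]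
  match_scalars <;> grind [Complex.I_mul_I]

private theorem inv_sqrt_two_mul_self : ((Real.sqrt 2 : ℂ))⁻¹ * ((Real.sqrt 2 : ℂ))⁻¹ = 1 / 2 := by
  rw [← mul_inv, ← Complex.ofReal_mul, Real.mul_self_sqrt zero_le_two]
  norm_num

theorem bilin_hermZbar_hermZ {m : ℕ} (B : V →ₗ[ℝ] V →ₗ[ℝ] V)
    {Bc : ℂ ⊗[ℝ] V →ₗ[ℂ] ℂ ⊗[ℝ] V →ₗ[ℂ] ℂ ⊗[ℝ] V}
    (hBc : ∀ x y : V, Bc ((1 : ℂ) ⊗ₜ[ℝ] x) ((1 : ℂ) ⊗ₜ[ℝ] y) = (1 : ℂ) ⊗ₜ[ℝ] (B x y))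
    (e : Fin m → V) (k : Fin m) :
    Bc (hermZbar J e k) (hermZ J e k) =
      (1 / 2 : ℂ) • ((1 : ℂ) ⊗ₜ[ℝ] (B (e k) (e k) + B (J (e k)) (J (e k)))
        - Complex.I • (1 : ℂ) ⊗ₜ[ℝ] (B (e k) (J (e k)) - B (J (e k)) (e k))) := by
  simp only [hermZ, hermZbar, map_smul, LinearMap.smul_apply, smul_smul, inv_sqrt_two_mul_self]
  simp only [map_add, map_sub, LinearMap.add_apply, map_smul, LinearMap.smul_apply, hBc,
    tmul_add, tmul_sub]
  match_scalars <;> grind [Complex.I_mul_I]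

end

theorem stmt11_general {V : Type*} [NormedAddCommGroup V] [InnerProductSpace ℝ V]
    (J : V →ₗ[ℝ] V) (hJ : ∀ v, J (J v) = -v)
    -- an ℝ-bilinear map `B : V × V → V`:
    (B : V →ₗ[ℝ] V →ₗ[ℝ] V)
    -- `Bc` is the complex-bilinear extension of `B` to `V_ℂ × V_ℂ → V_ℂ`:
    (Bc : ℂ ⊗[ℝ] V →ₗ[ℂ] ℂ ⊗[ℝ] V →ₗ[ℂ] ℂ ⊗[ℝ] V)
    (hBc : ∀ x y : V, Bc ((1 : ℂ) ⊗ₜ[ℝ] x) ((1 : ℂ) ⊗ₜ[ℝ] y) = (1 : ℂ) ⊗ₜ[ℝ] (B x y))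
    -- `T(X,Y) := B(X, JY) - J B(X, Y)`:
    (T : V → V → V) (hT : ∀ X Y : V, T X Y = B X (J Y) - J (B X Y))
    -- an orthonormal basis `{e_1, …, e_m, Je_1, …, Je_m}` of `V`:
    {m : ℕ} (e : Fin m → V)
    -- `δ := Σ_k [T(e_k, e_k) + T(Je_k, Je_k)]`:
    (δ : V) (hδ : δ = ∑ k : Fin m, (T (e k) (e k) + T (J (e k)) (J (e k)))) :
    comp01 J ((1 : ℂ) ⊗ₜ[ℝ] (J δ)) =
      (∑ k : Fin m, Bc (hermZbar J e k) (hermZ J e k))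
        + Complex.I • complexJ J (∑ k : Fin m, Bc (hermZbar J e k) (hermZ J e k)) := by
  set P := ∑ k, (B (e k) (e k) + B (J (e k)) (J (e k)))
  set Q := ∑ k, (B (e k) (J (e k)) - B (J (e k)) (e k))
  have hδPQ : δ = Q - J P := by
    simp only [hδ, T_self_add_T_J_self J hJ hT, Finset.sum_sub_distrib, P, Q, map_sum]
  have hsum : ∑ k, Bc (hermZbar J e k) (hermZ J e k) =
      (1 / 2 : ℂ) • ((1 : ℂ) ⊗ₜ[ℝ] P - Complex.I • (1 : ℂ) ⊗ₜ[ℝ] Q) := by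
    simp only [bilin_hermZbar_hermZ J B hBc, ← Finset.smul_sum, Finset.sum_sub_distrib, ← tmul_sum,
      P, Q]
  rw [hsum, hδPQ]
  exact comp01_tmul_J_sub_J J hJ P Q

theorem stmt11 {V : Type*} [NormedAddCommGroup V] [InnerProductSpace ℝ V]
    [FiniteDimensional ℝ V]
    (J : V →ₗ[ℝ] V) (hJ : ∀ v, J (J v) = -v)
    (hJiso : ∀ x y : V, inner ℝ (J x) (J y) = (inner ℝ x y : ℝ))
    -- an ℝ-bilinear map `B : V × V → V`:
    (B : V →ₗ[ℝ] V →ₗ[ℝ] V)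
    -- `Bc` is the complex-bilinear extension of `B` to `V_ℂ × V_ℂ → V_ℂ`:
    (Bc : ℂ ⊗[ℝ] V →ₗ[ℂ] ℂ ⊗[ℝ] V →ₗ[ℂ] ℂ ⊗[ℝ] V)
    (hBc : ∀ x y : V, Bc ((1 : ℂ) ⊗ₜ[ℝ] x) ((1 : ℂ) ⊗ₜ[ℝ] y) = (1 : ℂ) ⊗ₜ[ℝ] (B x y))
    -- `T(X,Y) := B(X, JY) - J B(X, Y)`:
    (T : V → V → V) (hT : ∀ X Y : V, T X Y = B X (J Y) - J (B X Y))
    -- an orthonormal basis `{e_1, …, e_m, Je_1, …, Je_m}` of `V`: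
    {m : ℕ} (e : Fin m → V)
    (b : Module.Basis (Fin m ⊕ Fin m) ℝ V) (hb : Orthonormal ℝ ⇑b)
    (hbe : ∀ k : Fin m, b (Sum.inl k) = e k)
    (hbJe : ∀ k : Fin m, b (Sum.inr k) = J (e k))
    -- `δ := Σ_k [T(e_k, e_k) + T(Je_k, Je_k)]`:
    (δ : V) (hδ : δ = ∑ k : Fin m, (T (e k) (e k) + T (J (e k)) (J (e k)))) :
    comp01 J ((1 : ℂ) ⊗ₜ[ℝ] (J δ)) =
      (∑ k : Fin m, Bc (hermZbar J e k) (hermZ J e k))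
        + Complex.I • complexJ J (∑ k : Fin m, Bc (hermZbar J e k) (hermZ J e k)) :=
  stmt11_general J hJ B Bc hBc T hT e δ hδ
end

section
/- There exists λ ≥ 0 such that ⟨f x, f y⟩_W = λ² ⟨x, y⟩_V for all x, y in the orthogonal complement of ker f; that is, f restricted to (ker f)^⊥ is a conformal linear map. Moreover, if f ≠ 0 then f maps (ker f)^⊥ onto W. (This is the pointwise fact that any holomorphic map from an almost Hermitian manifold to a complex 1-dimensional almost Hermitian manifold is horizontally weakly conformal.) -/
/-!
Since `J` is an isometry with `J² = -1`, the vectors `x` and `J x` are orthogonal of equal length,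
so `⟪a • x + b • J x, c • x + d • J x⟫ = (a c + b d) ‖x‖²`; in the plane `W` every `w ≠ 0` thus
spans `W` together with `J' w`. On `K = (ker f)ᗮ` the map `f` is injective and `K` is `J`-stable.
For `0 ≠ e ∈ K`, holomorphy gives `f (a • e + b • J e) = a • f e + b • J' (f e)`, and these images
exhaust `W`; hence `K = span {e, J e}` is mapped onto `W`, and comparing the two inner product
formulas shows that `f` is conformal on `K` with factor `‖f e‖ / ‖e‖`.
-/

open Submodule
open scoped InnerProductSpace

structure IsCompatibleComplexStructure {E : Type*} [NormedAddCommGroup E] [InnerProductSpace ℝ E]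
    (J : E →ₗ[ℝ] E) : Prop where
  apply_apply : ∀ v, J (J v) = -v
  inner_map_map : ∀ x y, ⟪J x, J y⟫_ℝ = ⟪x, y⟫_ℝ

namespace IsCompatibleComplexStructure

variable {E : Type*} [NormedAddCommGroup E] [InnerProductSpace ℝ E] {J : E →ₗ[ℝ] E}

lemma inner_self_apply (hJ : IsCompatibleComplexStructure J) (x : E) : ⟪x, J x⟫_ℝ = 0 := by
  have h := hJ.inner_map_map x (J x)
  rw [hJ.apply_apply, inner_neg_right, real_inner_comm] at h
  linarith

lemma inner_apply_self (hJ : IsCompatibleComplexStructure J) (x : E) : ⟪J x, x⟫_ℝ = 0 := by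
  rw [real_inner_comm, hJ.inner_self_apply]

lemma inner_smul_add_smul (hJ : IsCompatibleComplexStructure J) (x : E) (a b c d : ℝ) :
    ⟪a • x + b • J x, c • x + d • J x⟫_ℝ = (a * c + b * d) * ‖x‖ ^ 2 := by
  simp only [inner_add_left, inner_add_right, real_inner_smul_left, real_inner_smul_right,
    hJ.inner_self_apply, hJ.inner_apply_self, hJ.inner_map_map, real_inner_self_eq_norm_sq]
  ring

lemma linearIndependent_pair (hJ : IsCompatibleComplexStructure J) {x : E} (hx : x ≠ 0) :
    LinearIndependent ℝ ![x, J x] := by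
  rw [LinearIndependent.pair_iff]
  intro a b hab
  have h := hJ.inner_smul_add_smul x a b a b
  rw [hab, inner_zero_left] at h
  have hsq : a * a + b * b = 0 :=
    (mul_eq_zero.mp h.symm).resolve_right (by positivity)
  constructor <;> nlinarith [mul_self_nonneg a, mul_self_nonneg b]

lemma exists_smul_add_smul_eq (hJ : IsCompatibleComplexStructure J)
    (hE : Module.finrank ℝ E = 2) {x : E} (hx : x ≠ 0) (z : E) :
    ∃ a b : ℝ, a • x + b • J x = z := by
  have hspan := (hJ.linearIndependent_pair hx).span_eq_top_of_card_eq_finrank (by simp [hE])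
  rw [Matrix.range_cons_cons_empty] at hspan
  exact mem_span_pair.mp (hspan ▸ mem_top)

end IsCompatibleComplexStructure

section Holomorphic

variable {V W : Type*} [NormedAddCommGroup V] [InnerProductSpace ℝ V]
  [NormedAddCommGroup W] [InnerProductSpace ℝ W]
  {J : V →ₗ[ℝ] V} {J' : W →ₗ[ℝ] W} {f : V →ₗ[ℝ] W}

lemma apply_mem_orthogonal_ker (hJ : IsCompatibleComplexStructure J)
    (hf : ∀ v, f (J v) = J' (f v)) {x : V} (hx : x ∈ (LinearMap.ker f)ᗮ) :
    J x ∈ (LinearMap.ker f)ᗮ := by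
  intro v hv
  have hJv : J v ∈ LinearMap.ker f := by
    rw [LinearMap.mem_ker] at hv ⊢
    rw [hf, hv, map_zero]
  rw [← hJ.inner_map_map, hJ.apply_apply, inner_neg_right, hx _ hJv, neg_zero]

lemma map_smul_add_smul_of_comm (hf : ∀ v, f (J v) = J' (f v)) (e : V) (a b : ℝ) :
    f (a • e + b • J e) = a • f e + b • J' (f e) := by
  rw [map_add, map_smul, map_smul, hf]

lemma orthogonal_ker_eq_span_pair (hJ : IsCompatibleComplexStructure J)
    (hJ' : IsCompatibleComplexStructure J') (hW : Module.finrank ℝ W = 2)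
    (hf : ∀ v, f (J v) = J' (f v)) {e : V} (he : e ∈ (LinearMap.ker f)ᗮ) (hfe : f e ≠ 0) :
    (LinearMap.ker f)ᗮ = span ℝ {e, J e} := by
  have hle : span ℝ {e, J e} ≤ (LinearMap.ker f)ᗮ := by
    rw [span_le, Set.insert_subset_iff, Set.singleton_subset_iff]
    exact ⟨he, apply_mem_orthogonal_ker hJ hf he⟩
  refine le_antisymm (fun x hx => ?_) hle
  obtain ⟨a, b, hab⟩ := hJ'.exists_smul_add_smul_eq hW hfe (f x)
  have hmem : a • e + b • J e ∈ (LinearMap.ker f)ᗮ := hle (mem_span_pair.mpr ⟨a, b, rfl⟩)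
  have hfx : f (a • e + b • J e) = f x := by rw [map_smul_add_smul_of_comm hf, hab]
  exact mem_span_pair.mpr
    ⟨a, b, LinearMap.injOn_of_disjoint_ker le_rfl (orthogonal_disjoint _).symm hmem hx hfx⟩

end Holomorphic

theorem stmt13_general {V : Type*} [NormedAddCommGroup V] [InnerProductSpace ℝ V]
    [FiniteDimensional ℝ V]
    {W : Type*} [NormedAddCommGroup W] [InnerProductSpace ℝ W]
    (J : V →ₗ[ℝ] V) (hJ : ∀ v, J (J v) = -v)
    (hJiso : ∀ x y : V, inner ℝ (J x) (J y) = (inner ℝ x y : ℝ))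
    (J' : W →ₗ[ℝ] W) (hJ' : ∀ w, J' (J' w) = -w)
    (hJ'iso : ∀ u v : W, inner ℝ (J' u) (J' v) = (inner ℝ u v : ℝ))
    (hdimW : Module.finrank ℝ W = 2)
    (f : V →ₗ[ℝ] W) (hf : ∀ v : V, f (J v) = J' (f v)) :
    ∃ lam : ℝ, 0 ≤ lam ∧
      (∀ x ∈ (LinearMap.ker f)ᗮ, ∀ y ∈ (LinearMap.ker f)ᗮ,
        (inner ℝ (f x) (f y) : ℝ) = lam ^ 2 * inner ℝ x y) ∧
      (f ≠ 0 → ∀ w : W, ∃ x ∈ (LinearMap.ker f)ᗮ, f x = w) := by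
  have hJc : IsCompatibleComplexStructure J := ⟨hJ, hJiso⟩
  have hJ'c : IsCompatibleComplexStructure J' := ⟨hJ', hJ'iso⟩
  by_cases hf0 : f = 0
  · exact ⟨0, le_rfl, by simp [hf0], fun h => (h hf0).elim⟩
  have hK0 : (LinearMap.ker f)ᗮ ≠ ⊥ := by
    rwa [Ne, orthogonal_eq_bot_iff, LinearMap.ker_eq_top]
  obtain ⟨e, he, he0⟩ := exists_mem_ne_zero_of_ne_bot hK0
  have hfe : f e ≠ 0 := fun h => he0 ((orthogonal_disjoint _).le_bot ⟨h, he⟩)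
  have hK := orthogonal_ker_eq_span_pair hJc hJ'c hdimW hf he hfe
  refine ⟨‖f e‖ / ‖e‖, by positivity, ?_, fun _ w => ?_⟩
  · intro x hx y hy
    rw [hK] at hx hy
    obtain ⟨a, b, rfl⟩ := mem_span_pair.mp hx
    obtain ⟨c, d, rfl⟩ := mem_span_pair.mp hy
    rw [map_smul_add_smul_of_comm hf, map_smul_add_smul_of_comm hf, hJ'c.inner_smul_add_smul,
      hJc.inner_smul_add_smul]
    field_simp [norm_ne_zero_iff.mpr he0]
  · obtain ⟨a, b, rfl⟩ := hJ'c.exists_smul_add_smul_eq hdimW hfe w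
    exact ⟨a • e + b • J e, hK ▸ mem_span_pair.mpr ⟨a, b, rfl⟩, map_smul_add_smul_of_comm hf e a b⟩

theorem stmt13 {V : Type*} [NormedAddCommGroup V] [InnerProductSpace ℝ V]
    [FiniteDimensional ℝ V]
    {W : Type*} [NormedAddCommGroup W] [InnerProductSpace ℝ W]
    [FiniteDimensional ℝ W]
    (J : V →ₗ[ℝ] V) (hJ : ∀ v, J (J v) = -v)
    (hJiso : ∀ x y : V, inner ℝ (J x) (J y) = (inner ℝ x y : ℝ))
    (J' : W →ₗ[ℝ] W) (hJ' : ∀ w, J' (J' w) = -w)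
    (hJ'iso : ∀ u v : W, inner ℝ (J' u) (J' v) = (inner ℝ u v : ℝ))
    (hdimW : Module.finrank ℝ W = 2)
    (f : V →ₗ[ℝ] W) (hf : ∀ v : V, f (J v) = J' (f v)) :
    ∃ lam : ℝ, 0 ≤ lam ∧
      (∀ x ∈ (LinearMap.ker f)ᗮ, ∀ y ∈ (LinearMap.ker f)ᗮ,
        (inner ℝ (f x) (f y) : ℝ) = lam ^ 2 * inner ℝ x y) ∧
      (f ≠ 0 → ∀ w : W, ∃ x ∈ (LinearMap.ker f)ᗮ, f x = w) :=
  stmt13_general J hJ hJiso J' hJ' hJ'iso hdimW f hf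
end
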